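/- arXiv:2007.15912 — 3 statements merged into one kernel-verified Lean document; each statement's English description precedes it below -/
import Mathlib

section
/- Let G = (G_1,…,G_r) : ℝ^N → ℝ^r be continuously differentiable such that at every point x with G(x) = 0 the total derivative DG_x : ℝ^N → ℝ^r is surjective. If μ = (μ^1,…,μ^r) : ℝ^N → ℝ^r is differentiable and Σ_{a=1}^r μ^a(x) G_a(x) = 0 for all x ∈ ℝ^N, then μ(x) = 0 at every point x with G(x) = 0 (the coefficients of a combination of regular irreducible constraints that vanishes identically must themselves vanish on the constraint surface). -/
/-!
Differentiating `μ ⬝ᵥ G = 0` at a point `x` of the constraint surface, the term carrying the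
derivative of `μ` drops out because `G x = 0`, leaving `μ x ⬝ᵥ DG_x v = 0` for every `v`.
Surjectivity of `DG_x` lets us choose `v` with `DG_x v = μ x`, so `μ x ⬝ᵥ μ x = 0`.
-/

open Filter Topology Matrix

variable {E ι : Type*} [NormedAddCommGroup E] [NormedSpace ℝ E] [Fintype ι]

theorem HasFDerivAt.dotProduct {μ G : E → ι → ℝ} {μ' G' : E →L[ℝ] ι → ℝ} {x : E}
    (hμ : HasFDerivAt μ μ' x) (hG : HasFDerivAt G G' x) :
    HasFDerivAt (fun y => μ y ⬝ᵥ G y)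
      (∑ a, (μ x a • (ContinuousLinearMap.proj a).comp G'
        + G x a • (ContinuousLinearMap.proj a).comp μ')) x :=
  HasFDerivAt.fun_sum fun a _ =>
    (hasFDerivAt_pi'.1 hμ a).mul (hasFDerivAt_pi'.1 hG a)

theorem dotProduct_fderiv_eq_zero_of_dotProduct_eventually_eq_zero {μ G : E → ι → ℝ}
    {μ' G' : E →L[ℝ] ι → ℝ} {x : E} (hμ : HasFDerivAt μ μ' x) (hG : HasFDerivAt G G' x)
    (h : ∀ᶠ y in 𝓝 x, μ y ⬝ᵥ G y = 0) (hx : G x = 0) (v : E) :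
    μ x ⬝ᵥ G' v = 0 := by
  have hzero : HasFDerivAt (fun y => μ y ⬝ᵥ G y) (0 : E →L[ℝ] ℝ) x :=
    (hasFDerivAt_const 0 x).congr_of_eventuallyEq h
  have := congrArg (· v) ((hμ.dotProduct hG).unique hzero)
  simpa [hx, dotProduct] using this

theorem coefficients_vanish_on_constraint_surface_general {N r : ℕ}
    (G : (Fin N → ℝ) → (Fin r → ℝ)) (hG : ContDiff ℝ 1 G)
    (hreg : ∀ x, G x = 0 → Function.Surjective (fderiv ℝ G x))
    (μ : (Fin N → ℝ) → (Fin r → ℝ)) (hμ : Differentiable ℝ μ)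
    (h : ∀ x, ∑ a, μ x a * G x a = 0) :
    ∀ x, G x = 0 → μ x = 0 := by
  intro x hx
  obtain ⟨v, hv⟩ := hreg x hx (μ x)
  have hGx : HasFDerivAt G (fderiv ℝ G x) x := (hG.differentiable one_ne_zero x).hasFDerivAt
  have hμμ : μ x ⬝ᵥ μ x = 0 := hv ▸
    dotProduct_fderiv_eq_zero_of_dotProduct_eventually_eq_zero (hμ x).hasFDerivAt hGx
      (Eventually.of_forall h) hx v
  exact dotProduct_self_eq_zero.mp hμμ

/-- If `G : ℝ^N → ℝ^r` is C¹ with surjective differential at every point of its zero set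
(regular, irreducible constraints), and `μ : ℝ^N → ℝ^r` is differentiable with
`Σ_a μ^a G_a = 0` identically, then `μ` vanishes on the constraint surface `{G = 0}`. -/
theorem coefficients_vanish_on_constraint_surface {N r : ℕ} (hN : 1 ≤ N) (hr : 1 ≤ r)
    (G : (Fin N → ℝ) → (Fin r → ℝ)) (hG : ContDiff ℝ 1 G)
    (hreg : ∀ x, G x = 0 → Function.Surjective (fderiv ℝ G x))
    (μ : (Fin N → ℝ) → (Fin r → ℝ)) (hμ : Differentiable ℝ μ)
    (h : ∀ x, ∑ a, μ x a * G x a = 0) :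
    ∀ x, G x = 0 → μ x = 0 :=
  coefficients_vanish_on_constraint_surface_general G hG hreg μ hμ h
end

section
/- Suppose G_1,…,G_r are first class with structure functions C^c_{ab} for the canonical Poisson bracket on ℝ^n × ℝ^n, and suppose that at every point z of the constraint surface {z : G_a(z) = 0 for all a} the total derivative of G = (G_1,…,G_r) is surjective onto ℝ^r. Then for every d ∈ {1,…,r} and all a,b,c, the function given by the sum over the three cyclic permutations of (a,b,c) of [ Σ_{e=1}^r C^e_{ab} C^d_{ec} − {G_c, C^d_{ab}} ] vanishes at every point of the constraint surface. (On-shell Jacobi identity for the induced Lie algebroid structure on the constraint surface.) -/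
open scoped BigOperators

/-- `∂f/∂x^i` on phase space `ℝ^n × ℝ^n`. -/
noncomputable def pdx {n : ℕ} (f : (Fin n → ℝ) × (Fin n → ℝ) → ℝ) (i : Fin n)
    (z : (Fin n → ℝ) × (Fin n → ℝ)) : ℝ :=
  fderiv ℝ f z (Pi.single i 1, 0)

/-- `∂f/∂p_i` on phase space `ℝ^n × ℝ^n`. -/
noncomputable def pdp {n : ℕ} (f : (Fin n → ℝ) × (Fin n → ℝ) → ℝ) (i : Fin n)
    (z : (Fin n → ℝ) × (Fin n → ℝ)) : ℝ :=
  fderiv ℝ f z (0, Pi.single i 1)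

/-- The canonical Poisson bracket on `ℝ^n × ℝ^n`. -/
noncomputable def pbr {n : ℕ} (f g : (Fin n → ℝ) × (Fin n → ℝ) → ℝ)
    (z : (Fin n → ℝ) × (Fin n → ℝ)) : ℝ :=
  ∑ i, (pdx f i z * pdp g i z - pdp f i z * pdx g i z)

/-!
The Jacobi identity for the Poisson bracket of `G_a, G_b, G_c`, expanded with the first-class
relations and the Leibniz rule, reads `Σ_d K_d G_d = 0` on all of phase space, where `K_d` is the
cyclic sum of the statement. Differentiating at a point `z` of the constraint surface, where every
`G_d` vanishes, leaves `Σ_d K_d(z) dG_d(z) = 0`, and surjectivity of `dG(z)` forces `K_d(z) = 0`.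
-/

section Calculus

variable {𝕜 E F : Type*} [NontriviallyNormedField 𝕜] [NormedAddCommGroup E] [NormedSpace 𝕜 E]
  [NormedAddCommGroup F] [NormedSpace 𝕜 F] {f : E → F}

theorem ContDiff.differentiable_fderiv (hf : ContDiff 𝕜 2 f) : Differentiable 𝕜 (fderiv 𝕜 f) :=
  (hf.fderiv_right (m := 1) (by norm_num)).differentiable one_ne_zero

theorem hasFDerivAt_fderiv_apply_const {z : E} (hf : DifferentiableAt 𝕜 (fderiv 𝕜 f) z) (v : E) :
    HasFDerivAt (fun y => fderiv 𝕜 f y v) ((fderiv 𝕜 (fderiv 𝕜 f) z).flip v) z := by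
  simpa using hf.hasFDerivAt.clm_apply (hasFDerivAt_const v z)

end Calculus

theorem eq_zero_of_sum_mul_eq_zero_of_surjective {E ι : Type*} [NormedAddCommGroup E]
    [NormedSpace ℝ E] [Fintype ι] [DecidableEq ι] {K G : ι → E → ℝ} {z : E}
    (hK : ∀ i, DifferentiableAt ℝ (K i) z) (hG : ∀ i, DifferentiableAt ℝ (G i) z)
    (hGz : ∀ i, G i z = 0) (hsurj : Function.Surjective (fderiv ℝ (fun w i => G i w) z))
    (hKG : ∀ᶠ w in nhds z, ∑ i, K i w * G i w = 0) (i : ι) : K i z = 0 := by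
  have hD : HasFDerivAt (fun w => ∑ i, K i w * G i w) (∑ i, K i z • fderiv ℝ (G i) z) z := by
    simpa [hGz] using HasFDerivAt.fun_sum fun i _ => (hK i).hasFDerivAt.mul (hG i).hasFDerivAt
  have hD0 : ∑ i, K i z • fderiv ℝ (G i) z = 0 :=
    hD.unique ((hasFDerivAt_const 0 z).congr_of_eventuallyEq hKG)
  obtain ⟨v, hv⟩ := hsurj (Pi.single i 1)
  rw [(hasFDerivAt_pi.2 fun i => (hG i).hasFDerivAt).fderiv] at hv
  have hvj (j : ι) : fderiv ℝ (G j) z v = (Pi.single i 1 : ι → ℝ) j := congrFun hv j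
  simpa [hvj, Pi.single_apply] using congr($hD0 v)

theorem Finset.sum_sum_eq_zero_of_antisymm {ι : Type*} [Fintype ι] {S : ι → ι → ℝ}
    (h : ∀ i j, S i j + S j i = 0) : ∑ i, ∑ j, S i j = 0 := by
  have hswap : ∑ i, ∑ j, S i j = -∑ i, ∑ j, S i j := by
    conv_lhs => rw [Finset.sum_comm]
    simp only [← Finset.sum_neg_distrib]
    exact Finset.sum_congr rfl fun i _ => Finset.sum_congr rfl fun j _ =>
      eq_neg_of_add_eq_zero_left (h j i)
  linarith

section PoissonBracket

variable {n : ℕ}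

def xUnit (i : Fin n) : (Fin n → ℝ) × (Fin n → ℝ) := (Pi.single i 1, 0)

def pUnit (i : Fin n) : (Fin n → ℝ) × (Fin n → ℝ) := (0, Pi.single i 1)

variable {f g h : (Fin n → ℝ) × (Fin n → ℝ) → ℝ} {z : (Fin n → ℝ) × (Fin n → ℝ)}

theorem pbr_anticomm (f g : (Fin n → ℝ) × (Fin n → ℝ) → ℝ) (z : (Fin n → ℝ) × (Fin n → ℝ)) :
    pbr f g z = -pbr g f z := by
  simp only [pbr, ← Finset.sum_neg_distrib]
  exact Finset.sum_congr rfl fun i _ => by ring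

theorem pbr_fun_sum {ι : Type*} [Fintype ι] {u : ι → (Fin n → ℝ) × (Fin n → ℝ) → ℝ}
    (hu : ∀ e, DifferentiableAt ℝ (u e) z) :
    pbr f (fun w => ∑ e, u e w) z = ∑ e, pbr f (u e) z := by
  simp only [pbr, pdx, pdp, fderiv_fun_sum fun e _ => hu e, sum_apply, Finset.mul_sum,
    ← Finset.sum_sub_distrib]
  exact Finset.sum_comm

theorem pbr_fun_mul {u v : (Fin n → ℝ) × (Fin n → ℝ) → ℝ} (hu : DifferentiableAt ℝ u z)
    (hv : DifferentiableAt ℝ v z) :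
    pbr f (fun w => u w * v w) z = pbr f u z * v z + u z * pbr f v z := by
  simp only [pbr, pdx, pdp, fderiv_fun_mul hu hv, add_apply, smul_apply, smul_eq_mul,
    Finset.mul_sum, Finset.sum_mul, ← Finset.sum_add_distrib]
  exact Finset.sum_congr rfl fun i _ => by ring

theorem differentiable_pbr (hf : ContDiff ℝ 2 f) (hg : ContDiff ℝ 2 g) :
    Differentiable ℝ (pbr f g) := by
  have hf' := hf.differentiable_fderiv
  have hg' := hg.differentiable_fderiv
  unfold pbr pdx pdp
  fun_prop

theorem fderiv_pbr_apply (hf : ContDiff ℝ 2 f) (hg : ContDiff ℝ 2 g)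
    (z w : (Fin n → ℝ) × (Fin n → ℝ)) :
    fderiv ℝ (pbr f g) z w =
      ∑ i, (pdx f i z * fderiv ℝ (fderiv ℝ g) z w (pUnit i)
          + pdp g i z * fderiv ℝ (fderiv ℝ f) z w (xUnit i)
        - (pdp f i z * fderiv ℝ (fderiv ℝ g) z w (xUnit i)
          + pdx g i z * fderiv ℝ (fderiv ℝ f) z w (pUnit i))) := by
  have hf' := hasFDerivAt_fderiv_apply_const (hf.differentiable_fderiv z)
  have hg' := hasFDerivAt_fderiv_apply_const (hg.differentiable_fderiv z)
  have H : HasFDerivAt (pbr f g) _ z := HasFDerivAt.fun_sum fun i _ =>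
    ((hf' (xUnit i)).mul (hg' (pUnit i))).sub ((hf' (pUnit i)).mul (hg' (xUnit i)))
  simp only [H.fderiv, sum_apply, sub_apply, add_apply, smul_apply, smul_eq_mul,
    ContinuousLinearMap.flip_apply]
  rfl

theorem pbr_pbr_apply (hg : ContDiff ℝ 2 g) (hh : ContDiff ℝ 2 h)
    (z : (Fin n → ℝ) × (Fin n → ℝ)) :
    pbr f (pbr g h) z = ∑ j, ∑ i,
      (pdx f j z * (pdx g i z * fderiv ℝ (fderiv ℝ h) z (pUnit j) (pUnit i)
          + pdp h i z * fderiv ℝ (fderiv ℝ g) z (pUnit j) (xUnit i)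
        - (pdp g i z * fderiv ℝ (fderiv ℝ h) z (pUnit j) (xUnit i)
          + pdx h i z * fderiv ℝ (fderiv ℝ g) z (pUnit j) (pUnit i)))
      - pdp f j z * (pdx g i z * fderiv ℝ (fderiv ℝ h) z (xUnit j) (pUnit i)
          + pdp h i z * fderiv ℝ (fderiv ℝ g) z (xUnit j) (xUnit i)
        - (pdp g i z * fderiv ℝ (fderiv ℝ h) z (xUnit j) (xUnit i)
          + pdx h i z * fderiv ℝ (fderiv ℝ g) z (xUnit j) (pUnit i)))) := by
  refine Finset.sum_congr rfl fun j _ => ?_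
  rw [Finset.sum_sub_distrib, ← Finset.mul_sum, ← Finset.mul_sum]
  exact congrArg₂ _ (congrArg _ (fderiv_pbr_apply hg hh z _))
    (congrArg _ (fderiv_pbr_apply hg hh z _))

theorem pbr_jacobi (hf : ContDiff ℝ 2 f) (hg : ContDiff ℝ 2 g) (hh : ContDiff ℝ 2 h)
    (z : (Fin n → ℝ) × (Fin n → ℝ)) :
    pbr (pbr f g) h z + pbr (pbr g h) f z + pbr (pbr h f) g z = 0 := by
  have sf := (hf.contDiffAt (x := z)).isSymmSndFDerivAt (by simp)
  have sg := (hg.contDiffAt (x := z)).isSymmSndFDerivAt (by simp)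
  have sh := (hh.contDiffAt (x := z)).isSymmSndFDerivAt (by simp)
  rw [pbr_anticomm (pbr f g), pbr_anticomm (pbr g h), pbr_anticomm (pbr h f),
    pbr_pbr_apply hf hg, pbr_pbr_apply hg hh, pbr_pbr_apply hh hf]
  simp only [← neg_add, neg_eq_zero, ← Finset.sum_add_distrib]
  -- once the Hessians are symmetrized, the `(j, i)` and `(i, j)` summands cancel
  refine Finset.sum_sum_eq_zero_of_antisymm fun j i => ?_
  rw [sf (xUnit i) (xUnit j), sf (pUnit i) (pUnit j), sf (xUnit i) (pUnit j),
    sf (pUnit i) (xUnit j), sg (xUnit i) (xUnit j), sg (pUnit i) (pUnit j),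
    sg (xUnit i) (pUnit j), sg (pUnit i) (xUnit j), sh (xUnit i) (xUnit j),
    sh (pUnit i) (pUnit j), sh (xUnit i) (pUnit j), sh (pUnit i) (xUnit j)]
  ring

section FirstClass

variable {r : ℕ} {G : Fin r → (Fin n → ℝ) × (Fin n → ℝ) → ℝ}
  {C : Fin r → Fin r → Fin r → (Fin n → ℝ) × (Fin n → ℝ) → ℝ}

theorem pbr_pbr_eq_sum_mul_of_firstClass (hG : ∀ a, Differentiable ℝ (G a))
    (hC : ∀ a b c, Differentiable ℝ (C a b c))
    (hfc : ∀ a b z, pbr (G a) (G b) z = ∑ c, C a b c z * G c z)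
    (a b c : Fin r) (z : (Fin n → ℝ) × (Fin n → ℝ)) :
    pbr (pbr (G a) (G b)) (G c) z
      = ∑ d, ((∑ e, C a b e z * C e c d z) - pbr (G c) (C a b d) z) * G d z := by
  calc pbr (pbr (G a) (G b)) (G c) z
      = -pbr (G c) (fun w => ∑ e, C a b e w * G e w) z := by rw [pbr_anticomm, funext (hfc a b)]
    _ = -∑ e, (pbr (G c) (C a b e) z * G e z + C a b e z * pbr (G c) (G e) z) := by
      rw [pbr_fun_sum (u := fun e w => C a b e w * G e w) fun e => (hC a b e z).mul (hG e z)]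
      exact congrArg _ (Finset.sum_congr rfl fun e _ => pbr_fun_mul (hC a b e z) (hG e z))
    _ = ∑ e, (C a b e z * ∑ d, C e c d z * G d z - pbr (G c) (C a b e) z * G e z) := by
      rw [← Finset.sum_neg_distrib]
      refine Finset.sum_congr rfl fun e _ => ?_
      rw [pbr_anticomm (G c) (G e), hfc]
      ring
    _ = ∑ d, ((∑ e, C a b e z * C e c d z) - pbr (G c) (C a b d) z) * G d z := by
      simp only [sub_mul, Finset.sum_sub_distrib, Finset.mul_sum, Finset.sum_mul, mul_assoc]
      rw [Finset.sum_comm]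

end FirstClass

end PoissonBracket

theorem first_class_onshell_jacobi_general {n r : ℕ}
    (G : Fin r → (Fin n → ℝ) × (Fin n → ℝ) → ℝ)
    (hG : ∀ a, ContDiff ℝ (⊤ : ℕ∞) (G a))
    (C : Fin r → Fin r → Fin r → (Fin n → ℝ) × (Fin n → ℝ) → ℝ)
    (hC : ∀ a b c, ContDiff ℝ (⊤ : ℕ∞) (C a b c))
    (hfc : ∀ a b z, pbr (G a) (G b) z = ∑ c, C a b c z * G c z)
    (hreg : ∀ z, (∀ a, G a z = 0) →
      Function.Surjective (fderiv ℝ (fun w => (fun a => G a w : Fin r → ℝ)) z)) :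
    ∀ (d a b c : Fin r) (z : (Fin n → ℝ) × (Fin n → ℝ)), (∀ e, G e z = 0) →
      ((∑ e, C a b e z * C e c d z) - pbr (G c) (C a b d) z)
        + ((∑ e, C b c e z * C e a d z) - pbr (G a) (C b c d) z)
        + ((∑ e, C c a e z * C e b d z) - pbr (G b) (C c a d) z)
      = 0 := by
  intro d a b c z hz
  have hG2 a : ContDiff ℝ 2 (G a) := (hG a).of_le (WithTop.coe_le_coe.2 le_top)
  have hC2 a b c : ContDiff ℝ 2 (C a b c) := (hC a b c).of_le (WithTop.coe_le_coe.2 le_top)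
  have hGd a := (hG2 a).differentiable two_ne_zero
  have hCd a b c := (hC2 a b c).differentiable two_ne_zero
  set K : Fin r → (Fin n → ℝ) × (Fin n → ℝ) → ℝ := fun d w =>
    ((∑ e, C a b e w * C e c d w) - pbr (G c) (C a b d) w)
      + ((∑ e, C b c e w * C e a d w) - pbr (G a) (C b c d) w)
      + ((∑ e, C c a e w * C e b d w) - pbr (G b) (C c a d) w) with hK
  have hKd d : Differentiable ℝ (K d) := by
    have := differentiable_pbr (hG2 a) (hC2 b c d)
    have := differentiable_pbr (hG2 b) (hC2 c a d)
    have := differentiable_pbr (hG2 c) (hC2 a b d)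
    fun_prop
  have hKG w : ∑ d, K d w * G d w = 0 := by
    simpa only [hK, add_mul, Finset.sum_add_distrib, pbr_pbr_eq_sum_mul_of_firstClass hGd hCd hfc]
      using pbr_jacobi (hG2 a) (hG2 b) (hG2 c) w
  exact eq_zero_of_sum_mul_eq_zero_of_surjective (fun d => hKd d z) (fun e => hGd e z) hz
    (hreg z hz) (Filter.Eventually.of_forall hKG) d

/-- For regular irreducible first-class constraints `G_a` with structure functions `C^c_{ab}`
(written `C a b c`), the on-shell Jacobi identity holds: for each `d`, the cyclic sum over
`(a,b,c)` of `Σ_e C^e_{ab} C^d_{ec} − {G_c, C^d_{ab}}` vanishes at every point of the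
constraint surface. -/
theorem first_class_onshell_jacobi {n r : ℕ}
    (G : Fin r → (Fin n → ℝ) × (Fin n → ℝ) → ℝ)
    (hG : ∀ a, ContDiff ℝ (⊤ : ℕ∞) (G a))
    (C : Fin r → Fin r → Fin r → (Fin n → ℝ) × (Fin n → ℝ) → ℝ)
    (hC : ∀ a b c, ContDiff ℝ (⊤ : ℕ∞) (C a b c))
    (hCanti : ∀ a b c z, C a b c z = - C b a c z)
    (hfc : ∀ a b z, pbr (G a) (G b) z = ∑ c, C a b c z * G c z)
    (hreg : ∀ z, (∀ a, G a z = 0) →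
      Function.Surjective (fderiv ℝ (fun w => (fun a => G a w : Fin r → ℝ)) z)) :
    ∀ (d a b c : Fin r) (z : (Fin n → ℝ) × (Fin n → ℝ)), (∀ e, G e z = 0) →
      ((∑ e, C a b e z * C e c d z) - pbr (G c) (C a b d) z)
        + ((∑ e, C b c e z * C e a d z) - pbr (G a) (C b c d) z)
        + ((∑ e, C c a e z * C e b d z) - pbr (G b) (C c a d) z)
      = 0 :=
  first_class_onshell_jacobi_general G hG C hC hfc hreg
end

section
/- Compatibility of constraints with a Hamiltonian implies the flow preserves the constraint surface: let G_1,…,G_r, F and W_a^b : ℝ^n × ℝ^n → ℝ be smooth functions with {G_a, F} = Σ_{b=1}^r W_a^b G_b identically for all a (canonical bracket). Let I ⊆ ℝ be an interval and γ = (x,p) : I → ℝ^n × ℝ^n a C¹ solution of Hamilton's equations dx^i/dt = ∂F/∂p_i(γ(t)), dp_i/dt = −∂F/∂x^i(γ(t)). If G_a(γ(t₀)) = 0 for all a at some t₀ ∈ I, then G_a(γ(t)) = 0 for all a and all t ∈ I; i.e., the Hamiltonian flow of F does not leave the constraint surface. -/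
open scoped BigOperators

/-! Along a solution of Hamilton's equations, `d/dt G_a(γ t) = {G_a, F}(γ t)
= Σ_b W_a^b(γ t) G_b(γ t)`, so `y = (G_a ∘ γ)_a` solves the linear ODE `y' = M(t) y` with
continuous coefficients `M(t) = (W_a^b(γ t))`. Linear vector fields are Lipschitz, uniformly on
compact time intervals, so by uniqueness of solutions `y` agrees with the zero solution. -/

open Set Matrix

section LinearODE

variable {E : Type*} [NormedAddCommGroup E] [NormedSpace ℝ E]
  {A : ℝ → E →L[ℝ] E} {y : ℝ → E} {a b t₀ : ℝ}

theorem eqOn_zero_Icc_of_hasDerivAt_clm_apply (hA : ContinuousOn A (Icc a b))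
    (hy : ∀ t ∈ Icc a b, HasDerivAt y (A t (y t)) t) (ht₀ : t₀ ∈ Icc a b) (hy₀ : y t₀ = 0) :
    EqOn y 0 (Icc a b) := by
  obtain ⟨C, hC⟩ := isCompact_Icc.exists_bound_of_continuousOn hA
  have hlip : ∀ t ∈ Icc a b, LipschitzOnWith C.toNNReal (A t) univ := fun t ht =>
    ((A t).lipschitz.weaken (NNReal.le_toNNReal_of_coe_le (hC t ht))).lipschitzOnWith
  have hycont : ContinuousOn y (Icc a b) := fun t ht => (hy t ht).continuousAt.continuousWithinAt
  have hzero : ∀ t, HasDerivAt (0 : ℝ → E) (A t ((0 : ℝ → E) t)) t := fun _ => by simp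
  rw [← Icc_union_Icc_eq_Icc ht₀.1 ht₀.2]
  refine EqOn.union ?_ ?_
  · have hsub : Icc a t₀ ⊆ Icc a b := Icc_subset_Icc_right ht₀.2
    exact ODE_solution_unique_of_mem_Icc_left (fun t ht => hlip t (hsub (Ioc_subset_Icc_self ht)))
      (hycont.mono hsub) (fun t ht => (hy t (hsub (Ioc_subset_Icc_self ht))).hasDerivWithinAt)
      (fun _ _ => trivial) continuousOn_const (fun t _ => (hzero t).hasDerivWithinAt)
      (fun _ _ => trivial) hy₀
  · have hsub : Icc t₀ b ⊆ Icc a b := Icc_subset_Icc_left ht₀.1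
    exact ODE_solution_unique_of_mem_Icc_right (fun t ht => hlip t (hsub (Ico_subset_Icc_self ht)))
      (hycont.mono hsub) (fun t ht => (hy t (hsub (Ico_subset_Icc_self ht))).hasDerivWithinAt)
      (fun _ _ => trivial) continuousOn_const (fun t _ => (hzero t).hasDerivWithinAt)
      (fun _ _ => trivial) hy₀

theorem Set.OrdConnected.eqOn_zero_of_hasDerivAt_clm_apply {I : Set ℝ} (hI : I.OrdConnected)
    (hA : ContinuousOn A I) (hy : ∀ t ∈ I, HasDerivAt y (A t (y t)) t) (ht₀ : t₀ ∈ I)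
    (hy₀ : y t₀ = 0) : EqOn y 0 I := fun t ht =>
  have hsub : uIcc t₀ t ⊆ I := hI.uIcc_subset ht₀ ht
  eqOn_zero_Icc_of_hasDerivAt_clm_apply (hA.mono hsub) (fun s hs => hy s (hsub hs))
    left_mem_uIcc hy₀ right_mem_uIcc

end LinearODE

theorem ContinuousOn.toContinuousLinearMap_toLin' {X ι : Type*} [TopologicalSpace X] [Fintype ι]
    [DecidableEq ι] {M : X → Matrix ι ι ℝ} {s : Set X} (hM : ContinuousOn M s) :
    ContinuousOn (fun t => LinearMap.toContinuousLinearMap (toLin' (M t))) s :=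
  ((toLin' (R := ℝ) (m := ι) (n := ι)).trans
    LinearMap.toContinuousLinearMap).toContinuousLinearEquiv.continuous.comp_continuousOn hM

noncomputable def hamiltonianVectorField {n : ℕ} (F : (Fin n → ℝ) × (Fin n → ℝ) → ℝ)
    (z : (Fin n → ℝ) × (Fin n → ℝ)) : (Fin n → ℝ) × (Fin n → ℝ) :=
  (fun i => pdp F i z, fun i => -pdx F i z)

theorem fderiv_apply_eq_sum_pdx_add_sum_pdp {n : ℕ} (f : (Fin n → ℝ) × (Fin n → ℝ) → ℝ)
    (z v : (Fin n → ℝ) × (Fin n → ℝ)) :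
    fderiv ℝ f z v = ∑ i, v.1 i * pdx f i z + ∑ i, v.2 i * pdp f i z := by
  have hv : v = ∑ i, v.1 i • ((Pi.single i 1 : Fin n → ℝ), (0 : Fin n → ℝ))
      + ∑ i, v.2 i • ((0 : Fin n → ℝ), (Pi.single i 1 : Fin n → ℝ)) := by
    ext j <;> simp [Prod.fst_sum, Prod.snd_sum, Finset.sum_apply, Pi.single_apply]
  conv_lhs => rw [hv]
  simp only [map_add, map_sum, map_smul, smul_eq_mul]
  rfl

theorem fderiv_apply_hamiltonianVectorField {n : ℕ} (f F : (Fin n → ℝ) × (Fin n → ℝ) → ℝ)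
    (z : (Fin n → ℝ) × (Fin n → ℝ)) :
    fderiv ℝ f z (hamiltonianVectorField F z) = pbr f F z := by
  rw [fderiv_apply_eq_sum_pdx_add_sum_pdp, pbr, ← Finset.sum_add_distrib]
  exact Finset.sum_congr rfl fun i _ => by simp only [hamiltonianVectorField]; ring

theorem DifferentiableAt.hasDerivAt_comp_hamiltonian {n : ℕ} {f F : (Fin n → ℝ) × (Fin n → ℝ) → ℝ}
    {γ : ℝ → (Fin n → ℝ) × (Fin n → ℝ)} {t : ℝ} (hf : DifferentiableAt ℝ f (γ t))
    (hγ : HasDerivAt γ (hamiltonianVectorField F (γ t)) t) :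
    HasDerivAt (f ∘ γ) (pbr f F (γ t)) t := by
  rw [← fderiv_apply_hamiltonianVectorField]
  exact hf.hasFDerivAt.comp_hasDerivAt t hγ

theorem hamiltonian_flow_preserves_constraint_surface_general {n r : ℕ}
    (G : Fin r → (Fin n → ℝ) × (Fin n → ℝ) → ℝ)
    (F : (Fin n → ℝ) × (Fin n → ℝ) → ℝ)
    (W : Fin r → Fin r → (Fin n → ℝ) × (Fin n → ℝ) → ℝ)
    (hG : ∀ a, ContDiff ℝ (⊤ : ℕ∞) (G a))
    (hW : ∀ a b, ContDiff ℝ (⊤ : ℕ∞) (W a b))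
    (hcompat : ∀ a z, pbr (G a) F z = ∑ b, W a b z * G b z)
    (I : Set ℝ) (hI : I.OrdConnected)
    (γ : ℝ → (Fin n → ℝ) × (Fin n → ℝ))
    (hγ : ∀ t ∈ I, HasDerivAt γ
      ((fun i => pdp F i (γ t)), fun i => -(pdx F i (γ t))) t)
    (t₀ : ℝ) (ht₀ : t₀ ∈ I) (h0 : ∀ a, G a (γ t₀) = 0) :
    ∀ t ∈ I, ∀ a, G a (γ t) = 0 := by
  set M : ℝ → Matrix (Fin r) (Fin r) ℝ := fun t => Matrix.of fun a b => W a b (γ t)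
  have hM : ContinuousOn M I := fun t ht =>
    (continuousAt_pi.2 fun a => continuousAt_pi.2 fun b =>
      (hW a b).continuous.continuousAt.comp (hγ t ht).continuousAt).continuousWithinAt
  have hy : ∀ t ∈ I, HasDerivAt (fun t a => G a (γ t)) (M t *ᵥ fun a => G a (γ t)) t :=
    fun t ht => hasDerivAt_pi.2 fun a => by
      have := ((hG a).differentiable (by simp) (γ t)).hasDerivAt_comp_hamiltonian (hγ t ht)
      rwa [hcompat] at this
  exact fun t ht a => congrFun (hI.eqOn_zero_of_hasDerivAt_clm_apply hM.toContinuousLinearMap_toLin'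
    hy ht₀ (funext h0) ht) a

/-- Compatibility of constraints with a Hamiltonian implies the Hamiltonian flow preserves
the constraint surface: if `{G_a, F} = Σ_b W_a^b G_b` identically and `γ` is a C¹ solution of
Hamilton's equations for `F` on an interval `I` with `G(γ(t₀)) = 0` for some `t₀ ∈ I`, then
`G(γ(t)) = 0` for all `t ∈ I`. -/
theorem hamiltonian_flow_preserves_constraint_surface {n r : ℕ}
    (G : Fin r → (Fin n → ℝ) × (Fin n → ℝ) → ℝ)
    (F : (Fin n → ℝ) × (Fin n → ℝ) → ℝ)
    (W : Fin r → Fin r → (Fin n → ℝ) × (Fin n → ℝ) → ℝ)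
    (hG : ∀ a, ContDiff ℝ (⊤ : ℕ∞) (G a)) (hF : ContDiff ℝ (⊤ : ℕ∞) F)
    (hW : ∀ a b, ContDiff ℝ (⊤ : ℕ∞) (W a b))
    (hcompat : ∀ a z, pbr (G a) F z = ∑ b, W a b z * G b z)
    (I : Set ℝ) (hI : I.OrdConnected)
    (γ : ℝ → (Fin n → ℝ) × (Fin n → ℝ))
    (hγ : ∀ t ∈ I, HasDerivAt γ
      ((fun i => pdp F i (γ t)), fun i => -(pdx F i (γ t))) t)
    (t₀ : ℝ) (ht₀ : t₀ ∈ I) (h0 : ∀ a, G a (γ t₀) = 0) :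
    ∀ t ∈ I, ∀ a, G a (γ t) = 0 :=
  hamiltonian_flow_preserves_constraint_surface_general G F W hG hW hcompat I hI γ hγ t₀ ht₀ h0
end
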